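/- Let A, Ω, θ : ℝ → ℝ and L, V, y : ℝ → ℝ² be differentiable, let R(t) be the 2×2 rotation matrix by angle θ(t), and assume for all t: A'(t) = −(V₁(t)·L₂(t) − V₂(t)·L₁(t)), L'(t) = −Ω(t)·J(L(t)), θ'(t) = Ω(t), and y'(t) = R(t)·V(t). Define the spatial momentum ℓ(t) = R(t)·L(t) and a(t) = A(t) + y₁(t)·ℓ₂(t) − y₂(t)·ℓ₁(t). Then ℓ and a are constant. -/

import Mathlib

/- With `J` the quarter turn, `R(θ) v = cos θ • v + sin θ • J v`, so `d/dt (R L) = R (L̇ + θ̇ • J L)`,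
   which vanishes when `L̇ = -Ω • J L` and `θ̇ = Ω`. With `ℓ` constant,
   `d/dt (A + y × ℓ) = -(V × L) + (R V) × (R L)`, which vanishes because rotations preserve the
   planar cross product. -/

open Matrix

/-- The 2×2 rotation matrix by angle θ. -/
noncomputable def rot (θ : ℝ) : Matrix (Fin 2) (Fin 2) ℝ :=
  !![Real.cos θ, -Real.sin θ; Real.sin θ, Real.cos θ]

/-- Counterclockwise rotation by π/2: J(x₁,x₂) = (−x₂,x₁). -/
def Jv (v : Fin 2 → ℝ) : Fin 2 → ℝ := ![-v 1, v 0]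

def planarCross (u v : Fin 2 → ℝ) : ℝ := u 0 * v 1 - u 1 * v 0

theorem Jv_add (u v : Fin 2 → ℝ) : Jv (u + v) = Jv u + Jv v := by
  simp [Jv, add_comm]

theorem Jv_smul (c : ℝ) (v : Fin 2 → ℝ) : Jv (c • v) = c • Jv v := by
  simp [Jv]

theorem Jv_Jv (v : Fin 2 → ℝ) : Jv (Jv v) = -v := by
  ext i
  fin_cases i <;> simp [Jv]

theorem rot_mulVec (θ : ℝ) (v : Fin 2 → ℝ) :
    rot θ *ᵥ v = Real.cos θ • v + Real.sin θ • Jv v := by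
  ext i
  fin_cases i <;> simp [rot, Jv, mulVec, dotProduct, add_comm]

theorem planarCross_rot_mulVec (θ : ℝ) (u v : Fin 2 → ℝ) :
    planarCross (rot θ *ᵥ u) (rot θ *ᵥ v) = planarCross u v := by
  simp only [planarCross, rot_mulVec, Jv, Pi.add_apply, Pi.smul_apply, smul_eq_mul,
    cons_val_zero, cons_val_one]
  linear_combination (u 0 * v 1 - u 1 * v 0) * Real.sin_sq_add_cos_sq θ

section Derivatives

variable {t : ℝ} {u v : ℝ → Fin 2 → ℝ} {u' v' : Fin 2 → ℝ}

theorem HasDerivAt.Jv (hu : HasDerivAt u u' t) : HasDerivAt (fun s => Jv (u s)) (Jv u') t := by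
  refine hasDerivAt_pi.2 fun i => ?_
  fin_cases i
  · exact (hasDerivAt_pi.1 hu 1).neg
  · exact hasDerivAt_pi.1 hu 0

theorem HasDerivAt.planarCross (hu : HasDerivAt u u' t) (hv : HasDerivAt v v' t) :
    HasDerivAt (fun s => planarCross (u s) (v s))
      (planarCross u' (v t) + planarCross (u t) v') t := by
  refine (((hasDerivAt_pi.1 hu 0).mul (hasDerivAt_pi.1 hv 1)).sub
    ((hasDerivAt_pi.1 hu 1).mul (hasDerivAt_pi.1 hv 0))).congr_deriv ?_
  simp only [_root_.planarCross]
  ring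

theorem HasDerivAt.rot_mulVec {θ : ℝ → ℝ} {ω : ℝ} (hθ : HasDerivAt θ ω t)
    (hu : HasDerivAt u u' t) :
    HasDerivAt (fun s => rot (θ s) *ᵥ u s) (rot (θ t) *ᵥ (u' + ω • _root_.Jv (u t))) t := by
  simp only [_root_.rot_mulVec]
  refine ((hθ.cos.smul hu).add (hθ.sin.smul hu.Jv)).congr_deriv ?_
  rw [Jv_add, Jv_smul, Jv_Jv]
  module

end Derivatives

theorem eq_of_hasDerivAt_zero {E : Type*} [NormedAddCommGroup E] [NormedSpace ℝ E] {f : ℝ → E}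
    (hf : ∀ t, HasDerivAt f 0 t) (t₁ t₂ : ℝ) : f t₁ = f t₂ :=
  is_const_of_deriv_eq_zero (fun t => (hf t).differentiableAt) (fun t => (hf t).deriv) t₁ t₂

theorem spatial_momentum_conserved_general
    (A Ω θ : ℝ → ℝ) (L V y : ℝ → Fin 2 → ℝ)
    (hA : Differentiable ℝ A) (hθ : Differentiable ℝ θ)
    (hL : Differentiable ℝ L) (hy : Differentiable ℝ y)
    (hKirA : ∀ t, deriv A t = -(V t 0 * L t 1 - V t 1 * L t 0))
    (hKirL : ∀ t, deriv L t = -(Ω t) • Jv (L t))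
    (hθ' : ∀ t, deriv θ t = Ω t)
    (hy' : ∀ t, deriv y t = (rot (θ t)).mulVec (V t)) :
    ∀ t₁ t₂ : ℝ,
      (rot (θ t₁)).mulVec (L t₁) = (rot (θ t₂)).mulVec (L t₂)
        ∧ A t₁ + y t₁ 0 * (rot (θ t₁)).mulVec (L t₁) 1
            - y t₁ 1 * (rot (θ t₁)).mulVec (L t₁) 0
          = A t₂ + y t₂ 0 * (rot (θ t₂)).mulVec (L t₂) 1
            - y t₂ 1 * (rot (θ t₂)).mulVec (L t₂) 0 := by
  have hℓ : ∀ t, HasDerivAt (fun s => rot (θ s) *ᵥ L s) 0 t := fun t => by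
    have h := (hθ' t ▸ (hθ t).hasDerivAt).rot_mulVec (hKirL t ▸ (hL t).hasDerivAt)
    rwa [neg_smul, neg_add_cancel, mulVec_zero] at h
  have ha : ∀ t, HasDerivAt (fun s => A s + planarCross (y s) (rot (θ s) *ᵥ L s)) 0 t :=
    fun t => by
      refine ((hKirA t ▸ (hA t).hasDerivAt).add
        ((hy' t ▸ (hy t).hasDerivAt).planarCross (hℓ t))).congr_deriv ?_
      rw [planarCross_rot_mulVec]
      simp [planarCross]
  intro t₁ t₂
  refine ⟨eq_of_hasDerivAt_zero hℓ t₁ t₂, ?_⟩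
  simpa only [planarCross, add_sub_assoc] using eq_of_hasDerivAt_zero ha t₁ t₂

theorem spatial_momentum_conserved
    (A Ω θ : ℝ → ℝ) (L V y : ℝ → Fin 2 → ℝ)
    (hA : Differentiable ℝ A) (hΩ : Differentiable ℝ Ω) (hθ : Differentiable ℝ θ)
    (hL : Differentiable ℝ L) (hV : Differentiable ℝ V) (hy : Differentiable ℝ y)
    (hKirA : ∀ t, deriv A t = -(V t 0 * L t 1 - V t 1 * L t 0))
    (hKirL : ∀ t, deriv L t = -(Ω t) • Jv (L t))
    (hθ' : ∀ t, deriv θ t = Ω t)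
    (hy' : ∀ t, deriv y t = (rot (θ t)).mulVec (V t)) :
    ∀ t₁ t₂ : ℝ,
      (rot (θ t₁)).mulVec (L t₁) = (rot (θ t₂)).mulVec (L t₂)
        ∧ A t₁ + y t₁ 0 * (rot (θ t₁)).mulVec (L t₁) 1
            - y t₁ 1 * (rot (θ t₁)).mulVec (L t₁) 0
          = A t₂ + y t₂ 0 * (rot (θ t₂)).mulVec (L t₂) 1
            - y t₂ 1 * (rot (θ t₂)).mulVec (L t₂) 0 :=
  spatial_momentum_conserved_general A Ω θ L V y hA hθ hL hy hKirA hKirL hθ' hy'
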